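/- Let S be a set of n points in the plane in general position. For 0 ≤ k < (n-2)/2, the number of (≤k)-edges of S satisfies E_k(S) ≥ 3·C(k+2, 2), where C denotes the binomial coefficient. -/
import Mathlib


open Finset
open scoped Classical

abbrev Pt : Type := ℝ × ℝ

/-- Twice the signed area of the triangle `a b c`; its sign is the orientation. -/
noncomputable def det3 (a b c : Pt) : ℝ :=
  (b.1 - a.1) * (c.2 - a.2) - (b.2 - a.2) * (c.1 - a.1)

/-- `S` is in general position: no three of its points are collinear. -/
def GenPos (S : Finset Pt) : Prop :=
  ∀ a ∈ S, ∀ b ∈ S, ∀ c ∈ S, a ≠ b → a ≠ c → b ≠ c → det3 a b c ≠ 0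

/-- A finite point set is in convex position. -/
def ConvexPos (Q : Finset Pt) : Prop :=
  ∀ x ∈ Q, x ∉ convexHull ℝ (↑(Q.erase x) : Set Pt)

/-- `crN S` : the number of 4-element subsets of `S` in convex position. -/
noncomputable def crN (S : Finset Pt) : ℕ :=
  ((S.powersetCard 4).filter ConvexPos).card

/-- Number of points of `S` strictly to the left of the directed line `p → q`. -/
noncomputable def sideCount (S : Finset Pt) (p q : Pt) : ℕ :=
  (S.filter (fun x => 0 < det3 p q x)).card

/-- `{p, q}` is a `j`-edge of `S`: exactly `j` points of `S` lie in one of the open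
half-planes bounded by the line through `p` and `q`. -/
def IsJEdge (S : Finset Pt) (j : ℕ) (p q : Pt) : Prop :=
  p ∈ S ∧ q ∈ S ∧ p ≠ q ∧ (sideCount S p q = j ∨ sideCount S q p = j)

/-- `ej S j` : the number of (unordered) `j`-edges of `S`. -/
noncomputable def ej (S : Finset Pt) (j : ℕ) : ℕ :=
  ((S.powersetCard 2).filter (fun e => ∃ p q : Pt, e = {p, q} ∧ IsJEdge S j p q)).card

/-- `Ek S k` : the number of `(≤ k)`-edges of `S`. -/
noncomputable def Ek (S : Finset Pt) (k : ℕ) : ℕ :=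
  ((S.powersetCard 2).filter
    (fun e => ∃ p q : Pt, e = {p, q} ∧ ∃ j ≤ k, IsJEdge S j p q)).card

/-- The vertices of the convex hull of `S` (its extreme points). -/
noncomputable def hullVertices (S : Finset Pt) : Finset Pt :=
  S.filter (fun x => x ∉ convexHull ℝ (↑(S.erase x) : Set Pt))

noncomputable def dotP (v w : Pt) : ℝ := v.1 * w.1 + v.2 * w.2

noncomputable def crossP (v w : Pt) : ℝ := v.1 * w.2 - v.2 * w.1

lemma det3_aba (a b : Pt) : det3 a b a = 0 := by unfold det3; ring
lemma det3_abb (a b : Pt) : det3 a b b = 0 := by unfold det3; ring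
lemma det3_swap (a b c : Pt) : det3 b a c = -det3 a b c := by unfold det3; ring
lemma det3_swap23 (a b c : Pt) : det3 a c b = -det3 a b c := by unfold det3; ring
lemma det3_cyc (a b c : Pt) : det3 a b c = det3 b c a := by unfold det3; ring
lemma det3_eq_cross (a b c : Pt) : det3 a b c = crossP (b - a) (c - a) := by
  unfold det3 crossP
  simp only [Prod.fst_sub, Prod.snd_sub]

lemma dotP_self_pos {v : Pt} (h : v ≠ 0) : 0 < dotP v v := by
  have h1 : v.1 ≠ 0 ∨ v.2 ≠ 0 := by
    by_contra hcon
    push_neg at hcon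
    exact h (Prod.ext hcon.1 hcon.2)
  unfold dotP
  rcases h1 with h1 | h1 <;> nlinarith [sq_nonneg v.1, sq_nonneg v.2, mul_self_pos.mpr h1]

lemma perp_decomp (w z v : Pt) (hw : dotP w w ≠ 0) (hperp : dotP w z = 0) :
    dotP v z = (crossP w z / dotP w w) * crossP w v := by
  have hid : dotP v z * dotP w w = crossP w z * crossP w v + dotP w z * dotP v w := by
    unfold dotP crossP; ring
  rw [hperp, zero_mul, add_zero] at hid
  field_simp
  linarith

lemma zero_of_dot_cross (w z : Pt) (hw : dotP w w ≠ 0) (h1 : dotP w z = 0)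
    (h2 : crossP w z = 0) : z = 0 := by
  have e1 : z.1 * dotP w w = dotP w z * w.1 - crossP w z * w.2 := by
    unfold dotP crossP; ring
  have e2 : z.2 * dotP w w = dotP w z * w.2 + crossP w z * w.1 := by
    unfold dotP crossP; ring
  rw [h1, h2] at e1 e2
  simp only [zero_mul, sub_zero, zero_add, zero_sub, neg_zero] at e1 e2
  have z1 : z.1 = 0 := by
    rcases mul_eq_zero.mp e1 with h | h
    · exact h
    · exact absurd h hw
  have z2 : z.2 = 0 := by
    rcases mul_eq_zero.mp e2 with h | h
    · exact h
    · exact absurd h hw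
  exact Prod.ext z1 z2


lemma genPos_mono {S T : Finset Pt} (hTS : T ⊆ S) (h : GenPos S) : GenPos T :=
  fun a ha b hb c hc hab hac hbc => h a (hTS ha) b (hTS hb) c (hTS hc) hab hac hbc

lemma sideCount_add {T : Finset Pt} (hgp : GenPos T) {a b : Pt} (ha : a ∈ T) (hb : b ∈ T)
    (hab : a ≠ b) : sideCount T a b + sideCount T b a = T.card - 2 := by
  classical
  set T2 := (T.erase a).erase b with hT2
  have hT2sub : T2 ⊆ T := (erase_subset _ _).trans (erase_subset _ _)
  have memT2 : ∀ x, x ∈ T2 ↔ x ∈ T ∧ x ≠ a ∧ x ≠ b := by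
    intro x
    simp only [hT2, mem_erase]
    tauto
  have h1 : T.filter (fun x => 0 < det3 a b x) = T2.filter (fun x => 0 < det3 a b x) := by
    ext x
    simp only [mem_filter, memT2]
    constructor
    · rintro ⟨hxT, hpos⟩
      refine ⟨⟨hxT, ?_, ?_⟩, hpos⟩
      · rintro rfl; rw [det3_aba] at hpos; exact lt_irrefl _ hpos
      · rintro rfl; rw [det3_abb] at hpos; exact lt_irrefl _ hpos
    · rintro ⟨⟨hxT, _, _⟩, hpos⟩; exact ⟨hxT, hpos⟩
  have h2 : T.filter (fun x => 0 < det3 b a x) = T2.filter (fun x => 0 < det3 b a x) := by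
    ext x
    simp only [mem_filter, memT2]
    constructor
    · rintro ⟨hxT, hpos⟩
      refine ⟨⟨hxT, ?_, ?_⟩, hpos⟩
      · rintro rfl; rw [det3_abb] at hpos; exact lt_irrefl _ hpos
      · rintro rfl; rw [det3_aba] at hpos; exact lt_irrefl _ hpos
    · rintro ⟨⟨hxT, _, _⟩, hpos⟩; exact ⟨hxT, hpos⟩
  have h3 : T2.filter (fun x => 0 < det3 b a x) = T2.filter (fun x => ¬ (0 < det3 a b x)) := by
    apply filter_congr
    intro x hx
    rw [memT2] at hx
    obtain ⟨hxT, hxa, hxb⟩ := hx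
    have hne : det3 a b x ≠ 0 := hgp a ha b hb x hxT hab (Ne.symm hxa) (Ne.symm hxb)
    rw [det3_swap]
    constructor
    · intro h hpos; linarith
    · intro h
      rcases hne.lt_or_gt with h' | h'
      · linarith
      · exact absurd h' h
  have hcard2 : T2.card = T.card - 2 := by
    rw [hT2, card_erase_of_mem (mem_erase.mpr ⟨Ne.symm hab, hb⟩), card_erase_of_mem ha]
    omega
  unfold sideCount
  rw [h1, h2, h3, card_filter_add_card_filter_not, hcard2]

lemma sideCount_le_erase_add_one (S : Finset Pt) (p a b : Pt) :
    sideCount S a b ≤ sideCount (S.erase p) a b + 1 := by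
  classical
  unfold sideCount
  have hsub : S.filter (fun x => 0 < det3 a b x) ⊆
      insert p ((S.erase p).filter (fun x => 0 < det3 a b x)) := by
    intro x hx
    simp only [mem_filter] at hx
    rcases eq_or_ne x p with rfl | hne
    · exact mem_insert_self _ _
    · exact mem_insert_of_mem (mem_filter.mpr ⟨mem_erase.mpr ⟨hne, hx.1⟩, hx.2⟩)
  exact (card_le_card hsub).trans (card_insert_le _ _)

-- discrete sweep lemma
lemma sweep {α : Type*} [DecidableEq α] (Y : Finset α) (aa bb : α → ℝ) (k : ℕ)
    (ha : ∀ y ∈ Y, aa y ≠ 0)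
    (hdist : ∀ y ∈ Y, ∀ y' ∈ Y, y ≠ y' → aa y * bb y' ≠ aa y' * bb y)
    (hpos : (Y.filter (fun y => 0 < aa y)).card ≤ k)
    (hneg : k + 1 ≤ (Y.filter (fun y => aa y < 0)).card) :
    ∃ y₀ ∈ Y, ∃ s : ℝ, aa y₀ * s + bb y₀ = 0 ∧
      ((Y.erase y₀).filter (fun y => 0 < aa y * s + bb y)).card = k := by
  classical
  set sv : α → ℝ := fun y => -bb y / aa y with hsv
  have g1 : ∀ y ∈ Y, ∀ s : ℝ, (0 < aa y * s + bb y ↔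
      ((0 < aa y ∧ sv y < s) ∨ (aa y < 0 ∧ s < sv y))) := by
    intro y hy s
    rcases (ha y hy).lt_or_gt with h | h
    · constructor
      · intro hp
        refine Or.inr ⟨h, ?_⟩
        rw [hsv]
        rw [lt_div_iff_of_neg h]
        nlinarith
      · rintro (⟨h1, _⟩ | ⟨_, h2⟩)
        · linarith
        · rw [hsv] at h2
          rw [lt_div_iff_of_neg h] at h2
          nlinarith
    · constructor
      · intro hp
        refine Or.inl ⟨h, ?_⟩
        rw [hsv, div_lt_iff₀ h]
        nlinarith
      · rintro (⟨_, h2⟩ | ⟨h1, _⟩)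
        · rw [hsv, div_lt_iff₀ h] at h2
          nlinarith
        · linarith
  have g2 : ∀ y ∈ Y, ∀ y' ∈ Y, y ≠ y' → sv y ≠ sv y' := by
    intro y hy y' hy' hne heq
    rw [hsv] at heq
    simp only at heq
    rw [div_eq_div_iff (ha y hy) (ha y' hy')] at heq
    exact hdist y hy y' hy' hne (by linarith)
  have g3 : ∀ y ∈ Y, aa y * sv y + bb y = 0 := by
    intro y hy
    have h := ha y hy
    rw [hsv]
    dsimp only
    rw [mul_comm, div_mul_cancel₀ _ h, neg_add_cancel]
  set D := Y.filter (fun y => aa y < 0) with hD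
  set cnt : α → ℕ := fun y => ((Y.erase y).filter (fun z => 0 < aa z * sv y + bb z)).card
    with hcnt
  have hDY : D ⊆ Y := filter_subset _ _
  have hDne : D.Nonempty := card_pos.mp (by omega)
  -- the element with max sv
  obtain ⟨ymax, hymaxD, hymax⟩ := D.exists_max_image sv hDne
  -- cnt ymax ≤ k
  have hcmax : cnt ymax ≤ k := by
    refine le_trans (card_le_card ?_) hpos
    intro z hz
    simp only [mem_filter, mem_erase] at hz ⊢
    obtain ⟨⟨hzne, hzY⟩, hzpos⟩ := hz
    refine ⟨hzY, ?_⟩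
    rcases (g1 z hzY _).mp hzpos with ⟨h1, _⟩ | ⟨h1, h2⟩
    · exact h1
    · exfalso
      have : z ∈ D := mem_filter.mpr ⟨hzY, h1⟩
      exact absurd (hymax z this) (not_le.mpr h2)
  -- min element has cnt ≥ k
  obtain ⟨ymin, hyminD, hymin⟩ := D.exists_min_image sv hDne
  have hcmin : k ≤ cnt ymin := by
    have hsub : D.erase ymin ⊆ (Y.erase ymin).filter (fun z => 0 < aa z * sv ymin + bb z) := by
      intro z hz
      simp only [mem_erase] at hz
      obtain ⟨hzne, hzD⟩ := hz
      have hzY := hDY hzD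
      simp only [mem_filter, mem_erase]
      refine ⟨⟨hzne, hzY⟩, ?_⟩
      refine (g1 z hzY _).mpr (Or.inr ⟨(mem_filter.mp hzD).2, ?_⟩)
      exact lt_of_le_of_ne (hymin z hzD) (g2 ymin (hDY hyminD) z hzY (Ne.symm hzne))
    calc k ≤ D.card - 1 := by omega
    _ = (D.erase ymin).card := (card_erase_of_mem hyminD).symm
    _ ≤ cnt ymin := card_le_card hsub
  -- B : elements with cnt ≥ k
  set B := D.filter (fun y => k ≤ cnt y) with hB
  have hBne : B.Nonempty := ⟨ymin, mem_filter.mpr ⟨hyminD, hcmin⟩⟩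
  obtain ⟨yh, hyhB, hyh⟩ := B.exists_max_image sv hBne
  have hyhD : yh ∈ D := (mem_filter.mp hyhB).1
  have hyhY : yh ∈ Y := hDY hyhD
  have hyhk : k ≤ cnt yh := (mem_filter.mp hyhB).2
  rcases eq_or_lt_of_le hyhk with heq | hlt
  · exact ⟨yh, hyhY, sv yh, g3 yh hyhY, heq.symm⟩
  · exfalso
    have hyhne : yh ≠ ymax := fun h => by rw [h] at hlt; omega
    have hsvlt : sv yh < sv ymax :=
      lt_of_le_of_ne (hymax yh hyhD) (g2 yh hyhY ymax (hDY hymaxD) hyhne)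
    set E := D.filter (fun z => sv yh < sv z) with hE
    have hEne : E.Nonempty := ⟨ymax, mem_filter.mpr ⟨hymaxD, hsvlt⟩⟩
    obtain ⟨y', hy'E, hy'⟩ := E.exists_min_image sv hEne
    have hy'D : y' ∈ D := (mem_filter.mp hy'E).1
    have hy'Y : y' ∈ Y := hDY hy'D
    have hy'gt : sv yh < sv y' := (mem_filter.mp hy'E).2
    have hy'notB : ¬ k ≤ cnt y' := by
      intro h
      have : y' ∈ B := mem_filter.mpr ⟨hy'D, h⟩
      exact absurd (hyh y' this) (not_le.mpr hy'gt)
    -- cnt yh ≤ cnt y' + 1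
    have hstep : cnt yh ≤ cnt y' + 1 := by
      have hsub : (Y.erase yh).filter (fun z => 0 < aa z * sv yh + bb z) ⊆
          insert y' ((Y.erase y').filter (fun z => 0 < aa z * sv y' + bb z)) := by
        intro z hz
        simp only [mem_filter, mem_erase] at hz
        obtain ⟨⟨hzne, hzY⟩, hzpos⟩ := hz
        rcases eq_or_ne z y' with rfl | hzy'
        · exact mem_insert_self _ _
        · refine mem_insert_of_mem ?_
          simp only [mem_filter, mem_erase]
          refine ⟨⟨hzy', hzY⟩, ?_⟩
          rcases (g1 z hzY _).mp hzpos with ⟨h1, h2⟩ | ⟨h1, h2⟩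
          · exact (g1 z hzY _).mpr (Or.inl ⟨h1, h2.trans hy'gt⟩)
          · have hzD : z ∈ D := mem_filter.mpr ⟨hzY, h1⟩
            have : z ∈ E := mem_filter.mpr ⟨hzD, h2⟩
            have h3 : sv y' ≤ sv z := hy' z this
            have h4 : sv y' < sv z :=
              lt_of_le_of_ne h3 (g2 y' hy'Y z hzY (Ne.symm hzy'))
            exact (g1 z hzY _).mpr (Or.inr ⟨h1, h4⟩)
      calc cnt yh ≤ (insert y' ((Y.erase y').filter (fun z => 0 < aa z * sv y' + bb z))).card :=
            card_le_card hsub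
      _ ≤ cnt y' + 1 := card_insert_le _ _
    omega


-- rank counting lemma
lemma rank_count {α : Type*} [DecidableEq α] (T : Finset α) (f : α → ℝ)
    (hinj : ∀ a ∈ T, ∀ b ∈ T, a ≠ b → f a ≠ f b) (k : ℕ) (hk : k + 1 ≤ T.card) :
    (T.filter (fun q => (T.filter (fun x => f x < f q)).card ≤ k)).card = k + 1 := by
  classical
  set r : α → ℕ := fun q => (T.filter (fun x => f x < f q)).card with hr
  have hmono : ∀ a ∈ T, ∀ b ∈ T, f a < f b → r a < r b := by
    intro a ha b hb hab
    refine card_lt_card ?_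
    constructor
    · intro x hx
      simp only [mem_filter] at hx ⊢
      exact ⟨hx.1, hx.2.trans hab⟩
    · intro hsub
      have : a ∈ T.filter (fun x => f x < f b) := mem_filter.mpr ⟨ha, hab⟩
      have := hsub this
      simp only [mem_filter] at this
      exact absurd this.2 (lt_irrefl _)
  have hrinj : Set.InjOn r T := by
    intro a ha b hb hab
    by_contra hne
    rcases (hinj a ha b hb hne).lt_or_gt with h | h
    · exact absurd hab (Nat.ne_of_lt (hmono a ha b hb h))
    · exact absurd hab.symm (Nat.ne_of_lt (hmono b hb a ha h))
  have hsubrange : T.image r ⊆ Finset.range T.card := by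
    intro v hv
    obtain ⟨q, hq, rfl⟩ := mem_image.mp hv
    have : T.filter (fun x => f x < f q) ⊆ T.erase q := by
      intro x hx
      simp only [mem_filter] at hx
      refine mem_erase.mpr ⟨?_, hx.1⟩
      intro hxq
      rw [hxq] at hx
      exact absurd hx.2 (lt_irrefl _)
    have h1 : r q ≤ (T.erase q).card := card_le_card this
    rw [card_erase_of_mem hq] at h1
    have hpos : 0 < T.card := card_pos.mpr ⟨q, hq⟩
    exact mem_range.mpr (by omega)
  have himg : T.image r = Finset.range T.card := by
    apply Finset.eq_of_subset_of_card_le hsubrange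
    rw [card_range, card_image_of_injOn hrinj]
  have key : (T.filter (fun q => r q ≤ k)).image r = (T.image r).filter (fun v => v ≤ k) := by
    ext v
    simp only [mem_image, mem_filter]
    constructor
    · rintro ⟨q, ⟨hqT, hqk⟩, rfl⟩
      exact ⟨⟨q, hqT, rfl⟩, hqk⟩
    · rintro ⟨⟨q, hqT, rfl⟩, hvk⟩
      exact ⟨q, ⟨hqT, hvk⟩, rfl⟩
  have hcard : (T.filter (fun q => r q ≤ k)).card = ((T.image r).filter (fun v => v ≤ k)).card := by
    rw [← key, card_image_of_injOn (hrinj.mono (by intro x hx; exact (mem_filter.mp hx).1))]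
  rw [hcard, himg]
  have : (Finset.range T.card).filter (fun v => v ≤ k) = Finset.range (k+1) := by
    ext v
    simp only [mem_filter, mem_range]
    omega
  rw [this, card_range]

lemma sweep_center (S : Finset Pt) (hgp : GenPos S) (p : Pt) (hp : p ∈ S)
    (k : ℕ) (c : Pt) (hc : c ∈ S.erase p) (σ : ℝ) (hσ : σ = 1 ∨ σ = -1)
    (hpos : (((S.erase p).erase c).filter (fun y => 0 < σ * det3 c p y)).card ≤ k)
    (hneg : k + 1 ≤ (((S.erase p).erase c).filter (fun y => σ * det3 c p y < 0)).card) :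
    ∃ v w : Pt, v ∈ S.erase p ∧ w ∈ S.erase p ∧ v ≠ w ∧ (c = v ∨ c = w) ∧
      sideCount S v w = k ∧ sideCount (S.erase p) v w = k := by
  classical
  have hcp : c ≠ p := (mem_erase.mp hc).1
  have hcS : c ∈ S := (mem_erase.mp hc).2
  have hσ0 : σ ≠ 0 := by rcases hσ with rfl | rfl <;> norm_num
  have hpc0 : p - c ≠ 0 := sub_ne_zero_of_ne (Ne.symm hcp)
  set Y := (S.erase p).erase c with hY
  have hmemY : ∀ x, x ∈ Y ↔ x ≠ c ∧ x ≠ p ∧ x ∈ S := by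
    intro x
    simp only [hY, mem_erase]
  set aa : Pt → ℝ := fun y => σ * det3 c p y with haa
  set bb : Pt → ℝ := fun y => dotP (y - c) (c - p) with hbb
  have ha : ∀ y ∈ Y, aa y ≠ 0 := by
    intro y hy
    rw [hmemY] at hy
    obtain ⟨hyc, hyp, hyS⟩ := hy
    exact mul_ne_zero hσ0 (hgp c hcS p hp y hyS hcp (Ne.symm hyc) (Ne.symm hyp))
  have hdist : ∀ y ∈ Y, ∀ y' ∈ Y, y ≠ y' → aa y * bb y' ≠ aa y' * bb y := by
    intro y hy y' hy' hne heq
    rw [hmemY] at hy hy'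
    obtain ⟨hyc, hyp, hyS⟩ := hy
    obtain ⟨hy'c, hy'p, hy'S⟩ := hy'
    have hid : aa y * bb y' - aa y' * bb y = σ * (det3 c y y' * dotP (p - c) (p - c)) := by
      rw [haa, hbb]
      unfold det3 dotP
      simp only [Prod.fst_sub, Prod.snd_sub]
      ring
    have h1 : det3 c y y' ≠ 0 :=
      hgp c hcS y hyS y' hy'S (Ne.symm hyc) (Ne.symm hy'c) hne
    have h2 : dotP (p - c) (p - c) ≠ 0 := ne_of_gt (dotP_self_pos hpc0)
    have : aa y * bb y' - aa y' * bb y = 0 := by linarith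
    rw [hid] at this
    rcases mul_eq_zero.mp this with h | h
    · exact hσ0 h
    · rcases mul_eq_zero.mp h with h' | h'
      · exact h1 h'
      · exact h2 h'
  obtain ⟨y₀, hy₀Y, s, hzero, hcard⟩ := sweep Y aa bb k ha hdist hpos hneg
  rw [hmemY] at hy₀Y
  obtain ⟨hy₀c, hy₀p, hy₀S⟩ := hy₀Y
  have hy₀Y' : y₀ ∈ Y := by rw [hmemY]; exact ⟨hy₀c, hy₀p, hy₀S⟩
  set νs : Pt := (s * (-(σ * (p - c).2)) + (c - p).1, s * (σ * (p - c).1) + (c - p).2)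
    with hνs
  have keyF : ∀ x : Pt, dotP (x - c) νs = aa x * s + bb x := by
    intro x
    rw [haa, hbb, hνs]
    unfold dotP det3
    simp only [Prod.fst_sub, Prod.snd_sub]
    ring
  have hperp : dotP (y₀ - c) νs = 0 := by rw [keyF y₀]; exact hzero
  have hww : dotP (y₀ - c) (y₀ - c) ≠ 0 :=
    ne_of_gt (dotP_self_pos (sub_ne_zero_of_ne hy₀c))
  have hpneg : dotP (p - c) νs < 0 := by
    rw [keyF p, haa, hbb]
    simp only
    rw [det3_abb]
    have : dotP (p - c) (c - p) = -dotP (p - c) (p - c) := by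
      unfold dotP
      simp only [Prod.fst_sub, Prod.snd_sub]
      ring
    rw [this]
    have := dotP_self_pos hpc0
    nlinarith
  set lam := crossP (y₀ - c) νs / dotP (y₀ - c) (y₀ - c) with hlamdef
  have hdet : ∀ x : Pt, dotP (x - c) νs = lam * det3 c y₀ x := by
    intro x
    have h1 := perp_decomp (y₀ - c) νs (x - c) hww hperp
    rw [h1, det3_eq_cross]
  have hlam : lam ≠ 0 := by
    intro h0
    rw [hlamdef] at h0
    rcases div_eq_zero_iff.mp h0 with h | h
    · have : νs = 0 := zero_of_dot_cross (y₀ - c) νs hww hperp h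
      rw [this] at hpneg
      unfold dotP at hpneg
      simp at hpneg
    · exact hww h
  have hQp : ¬ (0 < aa p * s + bb p) := by
    rw [← keyF p]
    linarith
  rcases hlam.lt_or_gt with hlamneg | hlampos
  · -- lam < 0 : use (y₀, c)
    refine ⟨y₀, c, mem_erase.mpr ⟨hy₀p, hy₀S⟩, hc, hy₀c, Or.inr rfl, ?_, ?_⟩
    · unfold sideCount
      rw [show S.filter (fun x => 0 < det3 y₀ c x) =
          (Y.erase y₀).filter (fun y => 0 < aa y * s + bb y) from ?_]
      · exact hcard
      · ext x
        simp only [mem_filter, mem_erase, hmemY]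
        constructor
        · rintro ⟨hxS, hpos2⟩
          rw [det3_swap] at hpos2
          have hdx : det3 c y₀ x < 0 := by linarith
          have hx1 : x ≠ c := by
            rintro rfl
            rw [det3_aba] at hdx
            exact lt_irrefl _ hdx
          have hx2 : x ≠ y₀ := by
            rintro rfl
            rw [det3_abb] at hdx
            exact lt_irrefl _ hdx
          have hxq : 0 < dotP (x - c) νs := by
            rw [hdet x]
            exact mul_pos_of_neg_of_neg hlamneg hdx
          have hx3 : x ≠ p := by
            rintro rfl
            linarith
          rw [keyF x] at hxq
          exact ⟨⟨hx2, hx1, hx3, hxS⟩, hxq⟩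
        · rintro ⟨⟨hx2, hx1, hx3, hxS⟩, hq⟩
          have hxq : 0 < dotP (x - c) νs := by rw [keyF x]; exact hq
          rw [hdet x] at hxq
          have hdx : det3 c y₀ x < 0 := by nlinarith
          rw [det3_swap]
          exact ⟨hxS, by linarith⟩
    · unfold sideCount
      rw [show (S.erase p).filter (fun x => 0 < det3 y₀ c x) =
          (Y.erase y₀).filter (fun y => 0 < aa y * s + bb y) from ?_]
      · exact hcard
      · ext x
        simp only [mem_filter, mem_erase, hmemY]
        constructor
        · rintro ⟨⟨hx3, hxS⟩, hpos2⟩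
          rw [det3_swap] at hpos2
          have hdx : det3 c y₀ x < 0 := by linarith
          have hx1 : x ≠ c := by
            rintro rfl
            rw [det3_aba] at hdx
            exact lt_irrefl _ hdx
          have hx2 : x ≠ y₀ := by
            rintro rfl
            rw [det3_abb] at hdx
            exact lt_irrefl _ hdx
          have hxq : 0 < dotP (x - c) νs := by
            rw [hdet x]
            exact mul_pos_of_neg_of_neg hlamneg hdx
          rw [keyF x] at hxq
          exact ⟨⟨hx2, hx1, hx3, hxS⟩, hxq⟩
        · rintro ⟨⟨hx2, hx1, hx3, hxS⟩, hq⟩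
          have hxq : 0 < dotP (x - c) νs := by rw [keyF x]; exact hq
          rw [hdet x] at hxq
          have hdx : det3 c y₀ x < 0 := by nlinarith
          rw [det3_swap]
          exact ⟨⟨hx3, hxS⟩, by linarith⟩
  · -- lam > 0 : use (c, y₀)
    refine ⟨c, y₀, hc, mem_erase.mpr ⟨hy₀p, hy₀S⟩, Ne.symm hy₀c, Or.inl rfl, ?_, ?_⟩
    · unfold sideCount
      rw [show S.filter (fun x => 0 < det3 c y₀ x) =
          (Y.erase y₀).filter (fun y => 0 < aa y * s + bb y) from ?_]
      · exact hcard
      · ext x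
        simp only [mem_filter, mem_erase, hmemY]
        constructor
        · rintro ⟨hxS, hpos2⟩
          have hx1 : x ≠ c := by
            rintro rfl
            rw [det3_aba] at hpos2
            exact lt_irrefl _ hpos2
          have hx2 : x ≠ y₀ := by
            rintro rfl
            rw [det3_abb] at hpos2
            exact lt_irrefl _ hpos2
          have hxq : 0 < dotP (x - c) νs := by
            rw [hdet x]
            exact mul_pos hlampos hpos2
          have hx3 : x ≠ p := by
            rintro rfl
            linarith
          rw [keyF x] at hxq
          exact ⟨⟨hx2, hx1, hx3, hxS⟩, hxq⟩
        · rintro ⟨⟨hx2, hx1, hx3, hxS⟩, hq⟩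
          have hxq : 0 < dotP (x - c) νs := by rw [keyF x]; exact hq
          rw [hdet x] at hxq
          exact ⟨hxS, by nlinarith⟩
    · unfold sideCount
      rw [show (S.erase p).filter (fun x => 0 < det3 c y₀ x) =
          (Y.erase y₀).filter (fun y => 0 < aa y * s + bb y) from ?_]
      · exact hcard
      · ext x
        simp only [mem_filter, mem_erase, hmemY]
        constructor
        · rintro ⟨⟨hx3, hxS⟩, hpos2⟩
          have hx1 : x ≠ c := by
            rintro rfl
            rw [det3_aba] at hpos2
            exact lt_irrefl _ hpos2
          have hx2 : x ≠ y₀ := by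
            rintro rfl
            rw [det3_abb] at hpos2
            exact lt_irrefl _ hpos2
          have hxq : 0 < dotP (x - c) νs := by
            rw [hdet x]
            exact mul_pos hlampos hpos2
          rw [keyF x] at hxq
          exact ⟨⟨hx2, hx1, hx3, hxS⟩, hxq⟩
        · rintro ⟨⟨hx2, hx1, hx3, hxS⟩, hq⟩
          have hxq : 0 < dotP (x - c) νs := by rw [keyF x]; exact hq
          rw [hdet x] at hxq
          exact ⟨⟨hx3, hxS⟩, by nlinarith⟩


lemma exists_good_direction (S : Finset Pt) :
    ∃ u : Pt, 0 < dotP u u ∧ ∀ a ∈ S, ∀ b ∈ S, a ≠ b → dotP a u ≠ dotP b u := by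
  classical
  set B : Finset ℝ := (S ×ˢ S).image (fun q => -(q.1.1 - q.2.1) / (q.1.2 - q.2.2)) with hB
  obtain ⟨t, ht⟩ := B.exists_notMem
  refine ⟨(1, t), by unfold dotP; norm_num; nlinarith [sq_nonneg t], ?_⟩
  intro a ha b hb hab heq
  unfold dotP at heq
  norm_num at heq
  rcases eq_or_ne a.2 b.2 with h2 | h2
  · exact hab (Prod.ext (by rw [h2] at heq; linarith) h2)
  · apply ht
    rw [hB]
    refine mem_image.mpr ⟨(a, b), mem_product.mpr ⟨ha, hb⟩, ?_⟩
    have h2' : a.2 - b.2 ≠ 0 := sub_ne_zero_of_ne h2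
    field_simp
    linarith

lemma pair_eq_cases {α : Type*} [DecidableEq α] {a b c d : α}
    (h : ({a, b} : Finset α) = {c, d}) (hab : a ≠ b) :
    (a = c ∧ b = d) ∨ (a = d ∧ b = c) := by
  have hac : a ∈ ({c, d} : Finset α) := h ▸ mem_insert_self a {b}
  have hbc : b ∈ ({c, d} : Finset α) := h ▸ mem_insert_of_mem (mem_singleton_self b)
  simp only [mem_insert, mem_singleton] at hac hbc
  rcases hac with h1 | h1
  · rcases hbc with h2 | h2
    · exact absurd (h1.trans h2.symm) hab
    · exact Or.inl ⟨h1, h2⟩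
  · rcases hbc with h2 | h2
    · exact Or.inr ⟨h1, h2⟩
    · exact absurd (h1.trans h2.symm) hab

lemma main_step (k : ℕ) (S : Finset Pt) (hgp : GenPos S) (hn : 2*k+2 < S.card) :
    ∃ p ∈ S, ∀ FB : Finset (Finset Pt),
      FB ⊆ (S.powersetCard 2).filter
          (fun e => ∃ a b : Pt, e = {a, b} ∧ ∃ j ≤ k, IsJEdge S j a b) →
      (∀ e ∈ FB, p ∉ e) →
      (∀ e ∈ FB, ∀ a b : Pt, e = {a, b} → sideCount (S.erase p) a b ≠ k) →
      3*(k+1) + FB.card ≤ Ek S k := by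
  classical
  have hSne : S.Nonempty := card_pos.mp (by omega)
  obtain ⟨u, hu2, huinj⟩ := exists_good_direction S
  obtain ⟨p, hp, hmax⟩ := S.exists_max_image (fun x => dotP x u) hSne
  refine ⟨p, hp, ?_⟩
  have hmS' : (S.erase p).card = S.card - 1 := card_erase_of_mem hp
  have hmk : 2*k+2 ≤ (S.erase p).card := by omega
  have hd : ∀ x ∈ S.erase p, 0 < dotP (p - x) u := by
    intro x hx
    have hxp : x ≠ p := (mem_erase.mp hx).1
    have hxS : x ∈ S := (mem_erase.mp hx).2
    have h1 : dotP x u ≤ dotP p u := hmax x hxS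
    have h2 : dotP x u ≠ dotP p u := huinj x hxS p hp hxp
    have h3 : dotP (p - x) u = dotP p u - dotP x u := by
      unfold dotP
      simp only [Prod.fst_sub, Prod.snd_sub]
      ring
    rw [h3]
    have := lt_of_le_of_ne h1 h2
    linarith
  set τ : Pt → ℝ := fun x => crossP u (x - p) / dotP (p - x) u with hτ
  have idD : ∀ a b : Pt, dotP u u * det3 p a b =
      crossP u (a - p) * dotP (p - b) u - crossP u (b - p) * dotP (p - a) u := by
    intro a b
    unfold dotP crossP det3
    simp only [Prod.fst_sub, Prod.snd_sub]
    ring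
  have hsign : ∀ a ∈ S.erase p, ∀ b ∈ S.erase p, (0 < det3 p a b ↔ τ b < τ a) := by
    intro a ha b hb
    rw [hτ]
    simp only
    rw [div_lt_div_iff₀ (hd b hb) (hd a ha)]
    constructor
    · intro h
      have h3 : 0 < dotP u u * det3 p a b := mul_pos hu2 h
      linarith [idD a b]
    · intro h
      have h3 : 0 < dotP u u * det3 p a b := by rw [idD a b]; linarith
      rcases mul_pos_iff.mp h3 with ⟨_, h4⟩ | ⟨h4, _⟩
      · exact h4
      · linarith
  have hτinj : ∀ a ∈ S.erase p, ∀ b ∈ S.erase p, a ≠ b → τ a ≠ τ b := by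
    intro a ha b hb hab heq
    have h1 : ¬ (0 < det3 p a b) := by rw [hsign a ha b hb, heq]; exact lt_irrefl _
    have h2 : ¬ (0 < det3 p b a) := by rw [hsign b hb a ha, heq]; exact lt_irrefl _
    have hap : a ≠ p := (mem_erase.mp ha).1
    have hbp : b ≠ p := (mem_erase.mp hb).1
    have h0 := hgp p hp a (mem_of_mem_erase ha) b (mem_of_mem_erase hb)
      (Ne.symm hap) (Ne.symm hbp) hab
    rcases h0.lt_or_gt with h | h
    · rw [det3_swap23] at h2
      exact h2 (by linarith)
    · exact h1 h
  set ρ : Pt → ℕ := fun q => ((S.erase p).filter (fun x => τ x < τ q)).card with hρ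
  set ρ' : Pt → ℕ := fun q => ((S.erase p).filter (fun x => τ q < τ x)).card with hρ'
  have hρsum : ∀ q ∈ S.erase p, ρ q + ρ' q + 1 = (S.erase p).card := by
    intro q hq
    have e1 : (S.erase p).filter (fun x => τ x < τ q) =
        ((S.erase p).erase q).filter (fun x => τ x < τ q) := by
      ext x
      simp only [mem_filter, mem_erase]
      constructor
      · rintro ⟨hx, hlt⟩
        refine ⟨⟨?_, hx⟩, hlt⟩
        rintro rfl
        exact lt_irrefl _ hlt
      · rintro ⟨⟨_, hx⟩, hlt⟩
        exact ⟨hx, hlt⟩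
    have e2 : (S.erase p).filter (fun x => τ q < τ x) =
        ((S.erase p).erase q).filter (fun x => τ q < τ x) := by
      ext x
      simp only [mem_filter, mem_erase]
      constructor
      · rintro ⟨hx, hlt⟩
        refine ⟨⟨?_, hx⟩, hlt⟩
        rintro rfl
        exact lt_irrefl _ hlt
      · rintro ⟨⟨_, hx⟩, hlt⟩
        exact ⟨hx, hlt⟩
    have e3 : ((S.erase p).erase q).filter (fun x => τ q < τ x) =
        ((S.erase p).erase q).filter (fun x => ¬ (τ x < τ q)) := by
      apply filter_congr
      intro x hx
      have hxq : x ≠ q := (mem_erase.mp hx).1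
      have hx' : x ∈ S.erase p := mem_of_mem_erase hx
      have hne := hτinj x hx' q hq hxq
      constructor
      · intro h h'
        linarith
      · intro h
        rcases hne.lt_or_gt with h' | h'
        · exact absurd h' h
        · exact h'
    have e4 := card_filter_add_card_filter_not
      (s := (S.erase p).erase q) (p := fun x => τ x < τ q)
    rw [hρ, hρ']
    simp only
    rw [e1, e2, e3]
    rw [card_erase_of_mem hq] at e4
    have hq1 : 1 ≤ (S.erase p).card := card_pos.mpr ⟨q, hq⟩
    omega
  have hside1 : ∀ q ∈ S.erase p, sideCount S p q = ρ q := by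
    intro q hq
    unfold sideCount
    rw [hρ]
    simp only
    congr 1
    ext x
    simp only [mem_filter, mem_erase]
    constructor
    · rintro ⟨hxS, hpos⟩
      have hxp : x ≠ p := by
        rintro rfl
        rw [det3_aba] at hpos
        exact lt_irrefl _ hpos
      have hx' : x ∈ S.erase p := mem_erase.mpr ⟨hxp, hxS⟩
      exact ⟨⟨hxp, hxS⟩, (hsign q hq x hx').mp hpos⟩
    · rintro ⟨⟨hxp, hxS⟩, hlt⟩
      have hx' : x ∈ S.erase p := mem_erase.mpr ⟨hxp, hxS⟩
      exact ⟨hxS, (hsign q hq x hx').mpr hlt⟩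
  have hside2 : ∀ q ∈ S.erase p, sideCount S q p = ρ' q := by
    intro q hq
    unfold sideCount
    rw [hρ']
    simp only
    congr 1
    ext x
    simp only [mem_filter, mem_erase]
    constructor
    · rintro ⟨hxS, hpos⟩
      have hxp : x ≠ p := by
        rintro rfl
        rw [det3_abb] at hpos
        exact lt_irrefl _ hpos
      have hx' : x ∈ S.erase p := mem_erase.mpr ⟨hxp, hxS⟩
      rw [det3_cyc] at hpos
      exact ⟨⟨hxp, hxS⟩, (hsign x hx' q hq).mp hpos⟩
    · rintro ⟨⟨hxp, hxS⟩, hlt⟩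
      have hx' : x ∈ S.erase p := mem_erase.mpr ⟨hxp, hxS⟩
      refine ⟨hxS, ?_⟩
      rw [det3_cyc]
      exact (hsign x hx' q hq).mpr hlt
  -- QA sets
  set QA1 := (S.erase p).filter (fun q => ρ q ≤ k) with hQA1
  set QA2 := (S.erase p).filter (fun q => ρ' q ≤ k) with hQA2
  have hQA1card : QA1.card = k + 1 := by
    rw [hQA1]
    exact rank_count (S.erase p) τ hτinj k (by omega)
  have hQA2card : QA2.card = k + 1 := by
    have hinj' : ∀ a ∈ S.erase p, ∀ b ∈ S.erase p, a ≠ b → -τ a ≠ -τ b := by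
      intro a ha b hb hab heq
      exact hτinj a ha b hb hab (by linarith)
    have hrc := rank_count (S.erase p) (fun x => -τ x) hinj' k (by omega)
    have e5 : ∀ q : Pt, (S.erase p).filter (fun x => -τ x < -τ q) =
        (S.erase p).filter (fun x => τ q < τ x) := by
      intro q
      apply filter_congr
      intro x _
      constructor
      · intro h; linarith
      · intro h; linarith
    have e6 : (S.erase p).filter
        (fun q => ((S.erase p).filter (fun x => -τ x < -τ q)).card ≤ k) = QA2 := by
      rw [hQA2]
      apply filter_congr
      intro q _
      rw [e5 q]
    rw [e6] at hrc
    exact hrc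
  have hQAdisj : Disjoint QA1 QA2 := by
    rw [disjoint_left]
    intro q h1 h2
    rw [hQA1, mem_filter] at h1
    rw [hQA2, mem_filter] at h2
    have := hρsum q h1.1
    have := h1.2
    have := h2.2
    omega
  set QA := QA1 ∪ QA2 with hQA
  have hQAcard : QA.card = 2*k+2 := by
    rw [hQA, card_union_of_disjoint hQAdisj, hQA1card, hQA2card]
    omega
  have hQAS' : QA ⊆ S.erase p := by
    rw [hQA]
    exact union_subset (filter_subset _ _) (filter_subset _ _)
  set Ekset := (S.powersetCard 2).filter
      (fun e => ∃ a b : Pt, e = {a, b} ∧ ∃ j ≤ k, IsJEdge S j a b) with hEkset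
  have hEk : Ek S k = Ekset.card := rfl
  -- family A
  set FA := QA.image (fun q => ({p, q} : Finset Pt)) with hFA
  have hFAcard : FA.card = 2*k+2 := by
    rw [hFA, card_image_of_injOn, hQAcard]
    intro q hq q' hq' heq
    have hqp : q ≠ p := (mem_erase.mp (hQAS' hq)).1
    have heq' : ({p, q} : Finset Pt) = {p, q'} := heq
    have : q ∈ ({p, q'} : Finset Pt) := by
      rw [← heq']
      exact mem_insert_of_mem (mem_singleton_self q)
    rcases mem_insert.mp this with h | h
    · exact absurd h hqp
    · exact mem_singleton.mp h
  have hFAp : ∀ e ∈ FA, p ∈ e := by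
    intro e he
    rw [hFA] at he
    obtain ⟨q, _, rfl⟩ := mem_image.mp he
    exact mem_insert_self _ _
  have hFAsub : FA ⊆ Ekset := by
    intro e he
    rw [hFA] at he
    obtain ⟨q, hq, rfl⟩ := mem_image.mp he
    have hq' : q ∈ S.erase p := hQAS' hq
    have hqp : q ≠ p := (mem_erase.mp hq').1
    have hqS : q ∈ S := mem_of_mem_erase hq'
    rw [hEkset, mem_filter]
    constructor
    · rw [mem_powersetCard]
      constructor
      · intro x hx
        rcases mem_insert.mp hx with rfl | hx
        · exact hp
        · rw [mem_singleton.mp hx]; exact hqS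
      · exact card_pair (Ne.symm hqp)
    · rcases mem_union.mp hq with h | h
      · rw [hQA1, mem_filter] at h
        exact ⟨p, q, rfl, ρ q, h.2, hp, hqS, Ne.symm hqp, Or.inl (hside1 q hq')⟩
      · rw [hQA2, mem_filter] at h
        exact ⟨p, q, rfl, ρ' q, h.2, hp, hqS, Ne.symm hqp, Or.inr (hside2 q hq')⟩
  -- family C
  set FC := (S.powersetCard 2).filter
      (fun e => p ∉ e ∧ ∃ a b : Pt, e = {a, b} ∧ a ≠ b ∧
        sideCount S a b = k ∧ sideCount (S.erase p) a b = k) with hFC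
  have hFCp : ∀ e ∈ FC, p ∉ e := by
    intro e he
    exact (mem_filter.mp he).2.1
  have hFCsub : FC ⊆ Ekset := by
    intro e he
    rw [hFC, mem_filter] at he
    obtain ⟨hpow, _, a, b, rfl, hab, h1, _⟩ := he
    have hsub := (mem_powersetCard.mp hpow).1
    have haS : a ∈ S := hsub (mem_insert_self _ _)
    have hbS : b ∈ S := hsub (mem_insert_of_mem (mem_singleton_self b))
    rw [hEkset, mem_filter]
    exact ⟨hpow, a, b, rfl, k, le_refl k, haS, hbS, hab, Or.inl h1⟩
  have hFCget : ∀ c ∈ QA, ∃ e ∈ FC, c ∈ e := by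
    intro c hc
    have hc' : c ∈ S.erase p := hQAS' hc
    have hcases : (ρ c ≤ k ∧ k + 1 ≤ ρ' c) ∨ (ρ' c ≤ k ∧ k + 1 ≤ ρ c) := by
      have hsum := hρsum c hc'
      rcases mem_union.mp hc with h | h
      · rw [hQA1, mem_filter] at h
        exact Or.inl ⟨h.2, by omega⟩
      · rw [hQA2, mem_filter] at h
        have h2 := h.2
        rcases le_or_gt (ρ c) k with h3 | h3
        · exact Or.inl ⟨h3, by omega⟩
        · exact Or.inr ⟨h2, by omega⟩
    -- conversions between det filters and τ filters
    have econv1 : ((S.erase p).erase c).filter (fun y => 0 < det3 c p y) =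
        (S.erase p).filter (fun x => τ c < τ x) := by
      ext y
      simp only [mem_filter, mem_erase]
      constructor
      · rintro ⟨⟨hyc, hyp, hyS⟩, hpos⟩
        rw [det3_cyc] at hpos
        exact ⟨⟨hyp, hyS⟩, (hsign y (mem_erase.mpr ⟨hyp, hyS⟩) c hc').mp hpos⟩
      · rintro ⟨⟨hyp, hyS⟩, hlt⟩
        have hyc : y ≠ c := by
          rintro rfl
          exact lt_irrefl _ hlt
        refine ⟨⟨hyc, hyp, hyS⟩, ?_⟩
        rw [det3_cyc]
        exact (hsign y (mem_erase.mpr ⟨hyp, hyS⟩) c hc').mpr hlt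
    have econv2 : ((S.erase p).erase c).filter (fun y => det3 c p y < 0) =
        (S.erase p).filter (fun x => τ x < τ c) := by
      ext y
      simp only [mem_filter, mem_erase]
      constructor
      · rintro ⟨⟨hyc, hyp, hyS⟩, hneg2⟩
        have hy' : y ∈ S.erase p := mem_erase.mpr ⟨hyp, hyS⟩
        rw [det3_cyc] at hneg2
        have h1 : ¬ (τ c < τ y) := by
          intro h
          have := (hsign y hy' c hc').mpr h
          linarith
        have h2 := hτinj y hy' c hc' hyc
        rcases h2.lt_or_gt with h | h
        · exact ⟨⟨hyp, hyS⟩, h⟩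
        · exact absurd h h1
      · rintro ⟨⟨hyp, hyS⟩, hlt⟩
        have hy' : y ∈ S.erase p := mem_erase.mpr ⟨hyp, hyS⟩
        have hyc : y ≠ c := by
          rintro rfl
          exact lt_irrefl _ hlt
        have hd0 : det3 p y c ≠ 0 :=
          hgp p hp y hyS c (mem_of_mem_erase hc')
            (Ne.symm hyp) (Ne.symm (mem_erase.mp hc').1) hyc
        have h1 : ¬ (0 < det3 p y c) := by
          intro h
          have := (hsign y hy' c hc').mp h
          linarith
        refine ⟨⟨hyc, hyp, hyS⟩, ?_⟩
        rw [det3_cyc]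
        rcases hd0.lt_or_gt with h | h
        · exact h
        · exact absurd h h1
    have hmkOut : ∀ v w : Pt, v ∈ S.erase p → w ∈ S.erase p → v ≠ w → (c = v ∨ c = w) →
        sideCount S v w = k → sideCount (S.erase p) v w = k → ∃ e ∈ FC, c ∈ e := by
      intro v w hv hw hvw hcvw h1 h2
      refine ⟨{v, w}, ?_, ?_⟩
      · rw [hFC, mem_filter]
        refine ⟨?_, ?_, v, w, rfl, hvw, h1, h2⟩
        · rw [mem_powersetCard]
          constructor
          · intro x hx
            rcases mem_insert.mp hx with rfl | hx
            · exact mem_of_mem_erase hv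
            · rw [mem_singleton.mp hx]; exact mem_of_mem_erase hw
          · exact card_pair hvw
        · intro hpe
          rcases mem_insert.mp hpe with h | h
          · exact (mem_erase.mp hv).1 h.symm
          · exact (mem_erase.mp hw).1 (mem_singleton.mp h).symm
      · rcases hcvw with rfl | rfl
        · exact mem_insert_self _ _
        · exact mem_insert_of_mem (mem_singleton_self c)
    rcases hcases with ⟨hlow, hhigh⟩ | ⟨hlow, hhigh⟩
    · -- ρ c ≤ k : sweep with σ = -1
      have hpos : (((S.erase p).erase c).filter
          (fun y => 0 < (-1 : ℝ) * det3 c p y)).card ≤ k := by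
        have e8 : ((S.erase p).erase c).filter (fun y => 0 < (-1 : ℝ) * det3 c p y) =
            ((S.erase p).erase c).filter (fun y => det3 c p y < 0) := by
          apply filter_congr
          intro y _
          constructor
          · intro h; linarith
          · intro h; linarith
        rw [e8, econv2]
        exact hlow
      have hneg : k + 1 ≤ (((S.erase p).erase c).filter
          (fun y => (-1 : ℝ) * det3 c p y < 0)).card := by
        have e8 : ((S.erase p).erase c).filter (fun y => (-1 : ℝ) * det3 c p y < 0) =
            ((S.erase p).erase c).filter (fun y => 0 < det3 c p y) := by
          apply filter_congr
          intro y _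
          constructor
          · intro h; linarith
          · intro h; linarith
        rw [e8, econv1]
        exact hhigh
      obtain ⟨v, w, hv, hw, hvw, hcvw, h1, h2⟩ :=
        sweep_center S hgp p hp k c hc' (-1) (Or.inr rfl) hpos hneg
      exact hmkOut v w hv hw hvw hcvw h1 h2
    · -- ρ' c ≤ k : sweep with σ = 1
      have hpos : (((S.erase p).erase c).filter
          (fun y => 0 < (1 : ℝ) * det3 c p y)).card ≤ k := by
        have e8 : ((S.erase p).erase c).filter (fun y => 0 < (1 : ℝ) * det3 c p y) =
            ((S.erase p).erase c).filter (fun y => 0 < det3 c p y) := by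
          apply filter_congr
          intro y _
          constructor
          · intro h; linarith
          · intro h; linarith
        rw [e8, econv1]
        exact hlow
      have hneg : k + 1 ≤ (((S.erase p).erase c).filter
          (fun y => (1 : ℝ) * det3 c p y < 0)).card := by
        have e8 : ((S.erase p).erase c).filter (fun y => (1 : ℝ) * det3 c p y < 0) =
            ((S.erase p).erase c).filter (fun y => det3 c p y < 0) := by
          apply filter_congr
          intro y _
          constructor
          · intro h; linarith
          · intro h; linarith
        rw [e8, econv2]
        exact hhigh
      obtain ⟨v, w, hv, hw, hvw, hcvw, h1, h2⟩ :=
        sweep_center S hgp p hp k c hc' 1 (Or.inl rfl) hpos hneg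
      exact hmkOut v w hv hw hvw hcvw h1 h2
  -- counting family C
  have hFCcard : k + 1 ≤ FC.card := by
    have hch : ∀ c : Pt, ∃ e : Finset Pt, c ∈ QA → (e ∈ FC ∧ c ∈ e) := by
      intro c
      by_cases h : c ∈ QA
      · obtain ⟨e, he, hce⟩ := hFCget c h
        exact ⟨e, fun _ => ⟨he, hce⟩⟩
      · exact ⟨∅, fun h' => absurd h' h⟩
    choose F hF using hch
    have himg : QA.image F ⊆ FC := by
      intro e he
      obtain ⟨c, hc, rfl⟩ := mem_image.mp he
      exact (hF c hc).1
    have hfib : ∀ e ∈ QA.image F, (QA.filter (fun c => F c = e)).card ≤ 2 := by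
      intro e he
      have hesub : QA.filter (fun c => F c = e) ⊆ e := by
        intro c hcf
        rw [mem_filter] at hcf
        rw [← hcf.2]
        exact (hF c hcf.1).2
      have he2 : e.card = 2 := by
        have := himg he
        rw [hFC, mem_filter, mem_powersetCard] at this
        exact this.1.2
      calc (QA.filter (fun c => F c = e)).card ≤ e.card := card_le_card hesub
      _ = 2 := he2
    have hb := Finset.card_le_mul_card_image (s := QA) (f := F) 2 hfib
    have hb2 : (QA.image F).card ≤ FC.card := card_le_card himg
    omega
  -- final assembly
  intro FB hFB1 hFB2 hFB3
  have hd1 : Disjoint FA FC := by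
    rw [disjoint_left]
    intro e h1 h2
    exact hFCp e h2 (hFAp e h1)
  have hd2 : Disjoint FA FB := by
    rw [disjoint_left]
    intro e h1 h2
    exact hFB2 e h2 (hFAp e h1)
  have hd3 : Disjoint FC FB := by
    rw [disjoint_left]
    intro e h1 h2
    rw [hFC, mem_filter] at h1
    obtain ⟨_, _, a, b, he, hab, hsc1, hsc2⟩ := h1
    exact hFB3 e h2 a b he hsc2
  have hdisjU : Disjoint (FA ∪ FC) FB := disjoint_union_left.mpr ⟨hd2, hd3⟩
  have hsubU : FA ∪ FC ∪ FB ⊆ Ekset :=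
    union_subset (union_subset hFAsub hFCsub) hFB1
  have hcardU : (FA ∪ FC ∪ FB).card = FA.card + FC.card + FB.card := by
    rw [card_union_of_disjoint hdisjU, card_union_of_disjoint hd1]
  have hfin : (FA ∪ FC ∪ FB).card ≤ Ekset.card := card_le_card hsubU
  rw [hEk]
  omega

lemma core (k : ℕ) : ∀ S : Finset Pt, GenPos S → 2*k+2 < S.card →
    3 * Nat.choose (k+2) 2 ≤ Ek S k := by
  induction k with
  | zero =>
    intro S hgp hn
    obtain ⟨p, hp, hstep⟩ := main_step 0 S hgp hn
    have h := hstep ∅ (empty_subset _)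
      (fun e he => absurd he (notMem_empty e))
      (fun e he => absurd he (notMem_empty e))
    simp only [card_empty, add_zero] at h
    simpa [Nat.choose] using h
  | succ j IH =>
    intro S hgp hn
    obtain ⟨p, hp, hstep⟩ := main_step (j+1) S hgp hn
    have hgp' : GenPos (S.erase p) := genPos_mono (erase_subset _ _) hgp
    have hm : (S.erase p).card = S.card - 1 := card_erase_of_mem hp
    have hIH := IH (S.erase p) hgp' (by omega)
    set FB := ((S.erase p).powersetCard 2).filter
      (fun e => ∃ a b : Pt, e = {a, b} ∧ ∃ i ≤ j, IsJEdge (S.erase p) i a b) with hFBdef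
    have hFBcard : Ek (S.erase p) j = FB.card := rfl
    have hFB1 : FB ⊆ (S.powersetCard 2).filter
        (fun e => ∃ a b : Pt, e = {a, b} ∧ ∃ j' ≤ j+1, IsJEdge S j' a b) := by
      intro e he
      rw [hFBdef, mem_filter] at he
      obtain ⟨hpow, a, b, he', i, hi, haS', hbS', hab, hor⟩ := he
      obtain ⟨hsubS', hcard2⟩ := mem_powersetCard.mp hpow
      have haS : a ∈ S := mem_of_mem_erase (hsubS' (he' ▸ mem_insert_self a {b}))
      have hbS : b ∈ S :=
        mem_of_mem_erase (hsubS' (he' ▸ mem_insert_of_mem (mem_singleton_self b)))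
      refine mem_filter.mpr
        ⟨mem_powersetCard.mpr ⟨hsubS'.trans (erase_subset _ _), hcard2⟩, ?_⟩
      rcases hor with h | h
      · refine ⟨a, b, he', sideCount S a b, ?_, haS, hbS, hab, Or.inl rfl⟩
        have := sideCount_le_erase_add_one S p a b
        omega
      · refine ⟨a, b, he', sideCount S b a, ?_, haS, hbS, hab, Or.inr rfl⟩
        have := sideCount_le_erase_add_one S p b a
        omega
    have hFB2 : ∀ e ∈ FB, p ∉ e := by
      intro e he hpe
      rw [hFBdef, mem_filter] at he
      have hsubS' := (mem_powersetCard.mp he.1).1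
      exact (mem_erase.mp (hsubS' hpe)).1 rfl
    have hFB3 : ∀ e ∈ FB, ∀ a b : Pt, e = {a, b} → sideCount (S.erase p) a b ≠ j+1 := by
      intro e he a b heq
      rw [hFBdef, mem_filter] at he
      obtain ⟨hpow, a', b', he', i, hi, ha'S', hb'S', ha'b', hor⟩ := he
      have hcard2 := (mem_powersetCard.mp hpow).2
      have hab : a ≠ b := by
        rintro rfl
        rw [heq] at hcard2
        simp at hcard2
      have hpair : ({a, b} : Finset Pt) = {a', b'} := heq.symm.trans he'
      have hsum := sideCount_add hgp' ha'S' hb'S' ha'b'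
      rcases pair_eq_cases hpair hab with ⟨h1, h2⟩ | ⟨h1, h2⟩ <;> rw [h1, h2] <;>
        rcases hor with h | h <;> omega
    have hs := hstep FB hFB1 hFB2 hFB3
    have harith : Nat.choose (j+3) 2 = Nat.choose (j+2) 1 + Nat.choose (j+2) 2 :=
      Nat.choose_succ_succ (j+2) 1
    have h1r : Nat.choose (j+2) 1 = j+2 := Nat.choose_one_right _
    have hgoal : (3 : ℕ) * Nat.choose (j+1+2) 2 ≤ Ek S (j+1) := by
      have : Nat.choose (j+1+2) 2 = Nat.choose (j+3) 2 := by norm_num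
      omega
    exact hgoal

/-- for `0 ≤ k < (n-2)/2`, the number of `(≤k)`-edges of a set of `n`
points in general position is at least `3·C(k+2,2)`. -/
theorem statement8 (S : Finset Pt) (n : ℕ) (hcard : S.card = n) (hgp : GenPos S)
    (k : ℕ) (hk : 2 * k + 2 < n) :
    3 * Nat.choose (k + 2) 2 ≤ Ek S k := by
  have hkk : 2 * k + 2 < S.card := by rw [hcard]; exact hk
  exact core k S hgp hkk
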